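/- Sharpness of the phase transition, mean-field lower bound: For Bernoulli bond percolation on ℤ^d (d ≥ 1), there exists c > 0 such that for every p > p_c, ℙ_p[0 ↔ ∞] ≥ c (p − p_c). -/

import Mathlib

open scoped Classical

section Percolation

/-!  Bernoulli bond percolation on `ℤ^d`.

Vertices are points of `ℤ^d` (functions `Fin d → ℤ`).  An edge of the lattice joins two
vertices at Euclidean distance 1; we encode the edge `{x, x + eᵢ}` (where `eᵢ` is the
`i`-th unit vector) by the pair `(x, i)`, which gives a bijective encoding of the edge
set `𝔼^d`.  A percolation configuration assigns a Boolean (open/closed) to every edge.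

Probabilities of events depending on finitely many edges are expressed as the
corresponding finite sums of Bernoulli(`p`) product weights; probabilities of
increasing/decreasing limits of such events (`0 ↔ ∞`, existence of an infinite cluster)
are expressed as the corresponding monotone limits (`⨅`/`⨆`) of finite-volume
probabilities, which is how they are obtained from continuity of probability measures. -/

/-- A vertex of `ℤ^d`. -/
abbrev PVert (d : ℕ) := Fin d → ℤ

/-- An edge of `ℤ^d`: the pair `(x, i)` encodes the edge `{x, x + eᵢ}`. -/
abbrev PEdge (d : ℕ) := (Fin d → ℤ) × Fin d

/-- The `i`-th unit vector of `ℤ^d`. -/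
def unitVec (d : ℕ) (i : Fin d) : PVert d := fun j => if j = i then 1 else 0

/-- A percolation configuration: each edge is open (`true`) or closed (`false`). -/
abbrev PConfig (d : ℕ) := PEdge d → Bool

/-- `x` and `y` are joined by an open edge of `ω`. -/
def openAdj {d : ℕ} (ω : PConfig d) (x y : PVert d) : Prop :=
  ∃ i : Fin d, (y = x + unitVec d i ∧ ω (x, i) = true) ∨
               (x = y + unitVec d i ∧ ω (y, i) = true)

/-- `x` and `y` are connected by an open path of `ω` all of whose vertices lie in `S`. -/
def connIn {d : ℕ} (ω : PConfig d) (S : Set (PVert d)) (x y : PVert d) : Prop :=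
  Relation.ReflTransGen (fun a b => a ∈ S ∧ b ∈ S ∧ openAdj ω a b) x y

/-- The probability, under the product Bernoulli(`p`) measure `ℙ_p`, of an event `A`
depending only on the (finitely many) edges in `E`: the sum, over configurations `η` of
the edges of `E`, of the Bernoulli weight of `η` times the indicator of `A`. -/
noncomputable def cylProb (d : ℕ) (p : ℝ) (E : Finset (PEdge d))
    (A : PConfig d → Prop) : ℝ :=
  ∑ η : {e // e ∈ E} → Bool,
    (∏ e : {e // e ∈ E}, if η e then p else 1 - p) *
      (if A (fun e => if h : e ∈ E then η ⟨e, h⟩ else false) then 1 else 0)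

/-- The influence `Inf_e[𝟙_A] = 𝔼_p[|𝟙_A(ω) − 𝟙_A(Flip_e ω)|]` of the edge `e` on an
event `A` depending only on the edges in `E`. -/
noncomputable def cylInfluence (d : ℕ) (p : ℝ) (E : Finset (PEdge d))
    (A : PConfig d → Prop) (e : PEdge d) : ℝ :=
  ∑ η : {e' // e' ∈ E} → Bool,
    (∏ e' : {e' // e' ∈ E}, if η e' then p else 1 - p) *
      |(if A (fun e' => if h : e' ∈ E then η ⟨e', h⟩ else false) then (1 : ℝ) else 0) -
        (if A (Function.update (fun e' => if h : e' ∈ E then η ⟨e', h⟩ else false) e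
            (!(if h : e ∈ E then η ⟨e, h⟩ else false))) then (1 : ℝ) else 0)|

/-- The sup-norm `‖x‖_∞` of a vertex, as a natural number. -/
def supNorm {d : ℕ} (x : PVert d) : ℕ :=
  Finset.univ.sup fun i => (x i).natAbs

/-- The box `Λ_n = [−n,n]^d`, as a set of vertices. -/
def box (d : ℕ) (n : ℕ) : Set (PVert d) := {x | supNorm x ≤ n}

/-- The box `Λ_n`, as a finset. -/
noncomputable def boxF (d : ℕ) (n : ℕ) : Finset (PVert d) :=
  Fintype.piFinset fun _ => Finset.Icc (-(n : ℤ)) n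

/-- The edges with both endpoints in a given finset of vertices. -/
def edgesIn (d : ℕ) (V : Finset (PVert d)) : Finset (PEdge d) :=
  (V ×ˢ (Finset.univ : Finset (Fin d))).filter fun e => e.1 + unitVec d e.2 ∈ V

/-- `E_n`: the edges with both endpoints in `Λ_n`. -/
noncomputable def boxEdges (d : ℕ) (n : ℕ) : Finset (PEdge d) := edgesIn d (boxF d n)

/-- The event `{0 ↔ ∂Λ_n}`: the origin is connected to `∂Λ_n = {x : ‖x‖_∞ = n}` by an
open path (inside `Λ_n`; this only depends on the edges of `E_n`). -/
def zeroToBoundary (d : ℕ) (n : ℕ) (ω : PConfig d) : Prop :=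
  ∃ y : PVert d, supNorm y = n ∧ connIn ω (box d n) 0 y

/-- `θ_n(p) = ℙ_p[0 ↔ ∂Λ_n]` (with `θ_0 = 1`). -/
noncomputable def theta (d : ℕ) (p : ℝ) (n : ℕ) : ℝ :=
  cylProb d p (boxEdges d n) (zeroToBoundary d n)

/-- `ℙ_p[0 ↔ ∞]`: since the events `{0 ↔ ∂Λ_n}` decrease to `{0 ↔ ∞}`, this is the
decreasing limit `⨅ n, θ_n(p)`. -/
noncomputable def probZeroToInfty (d : ℕ) (p : ℝ) : ℝ := ⨅ n : ℕ, theta d p n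

/-- The event `{Λ_k ↔ ∂Λ_N}` (within `Λ_N`). -/
def boxToBoundary (d : ℕ) (k N : ℕ) (ω : PConfig d) : Prop :=
  ∃ x y : PVert d, supNorm x ≤ k ∧ supNorm y = N ∧ connIn ω (box d N) x y

/-- `ℙ_p[∃ an infinite open connected component]`: the events `{Λ_k ↔ ∂Λ_{k+n}}`
decrease (as `n → ∞`) to `{Λ_k ↔ ∞}`, which increase (as `k → ∞`) to the event that
some vertex lies in an infinite open cluster; accordingly the probability is the
monotone double limit `⨆ k, ⨅ n` of finite-volume probabilities. -/
noncomputable def probInfiniteCluster (d : ℕ) (p : ℝ) : ℝ :=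
  ⨆ k : ℕ, ⨅ n : ℕ,
    cylProb d p (boxEdges d (k + n)) (boxToBoundary d k (k + n))

/-- The critical point `p_c = sup{p ∈ [0,1] : ℙ_p[0 ↔ ∞] = 0}` of Bernoulli bond
percolation on `ℤ^d`. -/
noncomputable def pCrit (d : ℕ) : ℝ :=
  sSup {p : ℝ | p ∈ Set.Icc (0 : ℝ) 1 ∧ probZeroToInfty d p = 0}

end Percolation

section PlanarPercolation

/-! Rectangles and crossing events for `ℤ²`. -/

/-- The vertex set of the rectangle `R(n,m) = [0,n] × [0,m]` in `ℤ²`. -/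
def rect (n m : ℕ) : Set (PVert 2) :=
  {x | 0 ≤ x 0 ∧ x 0 ≤ n ∧ 0 ≤ x 1 ∧ x 1 ≤ m}

/-- The rectangle `R(n,m)`, as a finset. -/
noncomputable def rectF (n m : ℕ) : Finset (PVert 2) :=
  Fintype.piFinset fun j => Finset.Icc 0 (if j = 0 then (n : ℤ) else (m : ℤ))

/-- The edges of the rectangle `R(n,m)`. -/
noncomputable def rectEdges (n m : ℕ) : Finset (PEdge 2) := edgesIn 2 (rectF n m)

/-- `ℋ(n,m)`: the rectangle `R(n,m)` contains an open path from its left side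
`{0} × [0,m]` to its right side `{n} × [0,m]`. -/
def crossH (n m : ℕ) (ω : PConfig 2) : Prop :=
  ∃ x y : PVert 2, x ∈ rect n m ∧ x 0 = 0 ∧ y ∈ rect n m ∧ y 0 = n ∧
    connIn ω (rect n m) x y

/-- `𝒱(n,m)`: the rectangle `R(n,m)` contains an open path from its bottom side
`[0,n] × {0}` to its top side `[0,n] × {m}`. -/
def crossV (n m : ℕ) (ω : PConfig 2) : Prop :=
  ∃ x y : PVert 2, x ∈ rect n m ∧ x 1 = 0 ∧ y ∈ rect n m ∧ y 1 = m ∧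
    connIn ω (rect n m) x y

/-- `ℙ_p[ℋ(n,m)]`. -/
noncomputable def probCrossH (p : ℝ) (n m : ℕ) : ℝ :=
  cylProb 2 p (rectEdges n m) (crossH n m)

/-- `ℙ_p[𝒱(n,m)]`. -/
noncomputable def probCrossV (p : ℝ) (n m : ℕ) : ℝ :=
  cylProb 2 p (rectEdges n m) (crossV n m)

end PlanarPercolation

/-!
Following Duminil-Copin and Tassion, for finite `S ∋ 0` let
`φ_p(S) = p ∑_{xy ∈ ΔS} ℙ_p[0 ↔ x in S]` and let `p̃_c` be the supremum of the `p` for which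
some `S` has `φ_p(S) < 1`.

For such `p`, the Simon–Lieb inequality `θ_n ≤ φ_p(S) θ_{n-L-1}` (cut the path to `∂Λ_n` at its
last exit from the cluster of `0` in `S`) makes `θ_n(p)` decay exponentially, so `p̃_c ≤ p_c`.

Above `p̃_c`, decompose `{0 ↮ ∂Λ_n}` according to the set `𝒮` of vertices not connected to
`∂Λ_n`: on `{𝒮 = S}`, which only depends on the edges outside `S`, every edge `xy ∈ ΔS` with
`0 ↔ x` in `S` is pivotal. Russo's formula then gives `θ_n' ≥ (min_S φ_p(S)) (1 - θ_n) ≥ 1 - θ_n`,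
and integrating from `p̃_c` yields `θ_n(p) ≥ 1 - e^{p̃_c - p} ≥ (1 - e⁻¹)(p - p̃_c)`.
-/

open Finset Function

section

variable {d : ℕ} {p : ℝ}

section BernoulliExpectation

variable {E : Finset (PEdge d)}

noncomputable def ind (P : Prop) : ℝ := if P then 1 else 0

lemma ind_nonneg (P : Prop) : 0 ≤ ind P := by
  unfold ind; split <;> norm_num

lemma ind_le_one (P : Prop) : ind P ≤ 1 := by
  unfold ind; split <;> norm_num

lemma ind_of_true {P : Prop} (h : P) : ind P = 1 := if_pos h

lemma ind_of_false {P : Prop} (h : ¬ P) : ind P = 0 := if_neg h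

lemma ind_le_ind {P Q : Prop} (h : P → Q) : ind P ≤ ind Q := by
  by_cases hP : P
  · simp [ind, hP, h hP]
  · rw [ind_of_false hP]; exact ind_nonneg Q

lemma ind_and (P Q : Prop) : ind (P ∧ Q) = ind P * ind Q := by
  unfold ind; by_cases hP : P <;> by_cases hQ : Q <;> simp [hP, hQ]

lemma ind_not (P : Prop) : ind (¬ P) = 1 - ind P := by
  unfold ind; by_cases h : P <;> simp [h]

def ofOpenEdges (s : Finset (PEdge d)) : PConfig d := fun e => decide (e ∈ s)

noncomputable def bernoulliWeight (p : ℝ) (E s : Finset (PEdge d)) : ℝ :=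
  p ^ #s * (1 - p) ^ #(E \ s)

/-- `𝔼_p[F]` for `F` depending only on the edges of `E`; edges outside `E` are taken closed. -/
noncomputable def bernoulliExpect (p : ℝ) (E : Finset (PEdge d)) (F : PConfig d → ℝ) : ℝ :=
  ∑ s ∈ E.powerset, bernoulliWeight p E s * F (ofOpenEdges s)

lemma bernoulliWeight_nonneg (h0 : 0 ≤ p) (h1 : p ≤ 1) (E s : Finset (PEdge d)) :
    0 ≤ bernoulliWeight p E s := by
  have : 0 ≤ 1 - p := by linarith
  unfold bernoulliWeight; positivity

lemma sum_bernoulliWeight (p : ℝ) (E : Finset (PEdge d)) :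
    ∑ s ∈ E.powerset, bernoulliWeight p E s = 1 := by
  rw [← one_pow #E, ← add_sub_cancel p 1, ← sum_pow_mul_eq_add_pow]
  refine sum_congr rfl fun s hs => ?_
  rw [bernoulliWeight, card_sdiff_of_subset (mem_powerset.1 hs)]

lemma bernoulliExpect_const (p c : ℝ) (E : Finset (PEdge d)) :
    bernoulliExpect p E (fun _ => c) = c := by
  rw [bernoulliExpect, ← sum_mul, sum_bernoulliWeight, one_mul]

lemma bernoulliExpect_mono (h0 : 0 ≤ p) (h1 : p ≤ 1) {E : Finset (PEdge d)}
    {F G : PConfig d → ℝ} (h : ∀ ω, F ω ≤ G ω) : bernoulliExpect p E F ≤ bernoulliExpect p E G :=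
  sum_le_sum fun s _ => mul_le_mul_of_nonneg_left (h _) (bernoulliWeight_nonneg h0 h1 E s)

lemma bernoulliExpect_sub (E : Finset (PEdge d)) (F G : PConfig d → ℝ) :
    bernoulliExpect p E (fun ω => F ω - G ω) = bernoulliExpect p E F - bernoulliExpect p E G := by
  simp only [bernoulliExpect, mul_sub, sum_sub_distrib]

lemma bernoulliExpect_sum {ι : Type*} (E : Finset (PEdge d)) (u : Finset ι)
    (F : ι → PConfig d → ℝ) :
    bernoulliExpect p E (fun ω => ∑ i ∈ u, F i ω) = ∑ i ∈ u, bernoulliExpect p E (F i) := by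
  simp only [bernoulliExpect, mul_sum]
  exact sum_comm

/-- A configuration `η` of the edges of `E` is encoded by its set of open edges. -/
lemma sum_configurations_eq_sum_powerset (E : Finset (PEdge d)) (F : PConfig d → ℝ) :
    ∑ η : {e // e ∈ E} → Bool,
      (∏ e : {e // e ∈ E}, if η e then p else 1 - p) *
        F (fun e => if h : e ∈ E then η ⟨e, h⟩ else false) = bernoulliExpect p E F := by
  set extend : ({e // e ∈ E} → Bool) → PConfig d :=
    fun η e => if h : e ∈ E then η ⟨e, h⟩ else false
  have extend_val : ∀ η (e : {e // e ∈ E}), extend η e = η e := fun η e => dif_pos e.2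
  refine sum_nbij' (fun η => E.filter fun e => extend η e) (fun s e => decide (e.1 ∈ s))
    (fun η _ => mem_powerset.2 (filter_subset _ _)) (fun _ _ => mem_univ _) ?_ ?_ ?_
  · intro η _
    funext e
    simp [extend_val, e.2]
  · intro s hs
    ext e
    by_cases he : e ∈ E
    · simp [extend, he]
    · simpa [extend, he] using fun h => he (mem_powerset.1 hs h)
  · intro η _
    have hcfg : ofOpenEdges (E.filter fun e => extend η e) = extend η := by
      funext e
      by_cases he : e ∈ E <;> simp [ofOpenEdges, extend, he]
    rw [hcfg, bernoulliWeight, ← filter_not, ← prod_const, ← prod_const, ← prod_ite,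
      ← prod_coe_sort E]
    simp only [extend_val]
    rfl

lemma cylProb_eq_bernoulliExpect (E : Finset (PEdge d)) (A : PConfig d → Prop) :
    cylProb d p E A = bernoulliExpect p E (fun ω => ind (A ω)) :=
  sum_configurations_eq_sum_powerset (p := p) E fun ω => ind (A ω)

lemma bernoulliExpect_mul_const (E : Finset (PEdge d)) (F : PConfig d → ℝ) (c : ℝ) :
    bernoulliExpect p E (fun ω => F ω * c) = bernoulliExpect p E F * c := by
  simp only [bernoulliExpect, sum_mul, mul_assoc]

lemma bernoulliExpect_empty (F : PConfig d → ℝ) :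
    bernoulliExpect p ∅ F = F (ofOpenEdges ∅) := by
  simp [bernoulliExpect, bernoulliWeight]

lemma update_ofOpenEdges (e : PEdge d) (s : Finset (PEdge d)) (b : Bool) :
    update (ofOpenEdges s) e b = ofOpenEdges (if b then insert e s else s.erase e) := by
  funext x
  by_cases hx : x = e
  · subst hx; cases b <;> simp [ofOpenEdges]
  · rw [update_of_ne hx]; cases b <;> simp [ofOpenEdges, hx]

lemma bernoulliWeight_insert {e : PEdge d} {s : Finset (PEdge d)} (he : e ∉ E) (hs : s ⊆ E) :
    bernoulliWeight p (insert e E) s = (1 - p) * bernoulliWeight p E s ∧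
      bernoulliWeight p (insert e E) (insert e s) = p * bernoulliWeight p E s := by
  have hes : e ∉ s := fun h => he (hs h)
  refine ⟨?_, ?_⟩ <;> rw [bernoulliWeight, bernoulliWeight]
  · rw [insert_sdiff_of_notMem _ hes, card_insert_of_notMem (by simp [he])]; ring
  · rw [insert_sdiff_insert, sdiff_insert_of_notMem he, card_insert_of_notMem hes]; ring

lemma bernoulliExpect_insert {e : PEdge d} (he : e ∉ E) (F : PConfig d → ℝ) :
    bernoulliExpect p (insert e E) F =
      (1 - p) * bernoulliExpect p E (fun ω => F (update ω e false)) +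
        p * bernoulliExpect p E (fun ω => F (update ω e true)) := by
  rw [bernoulliExpect, sum_powerset_insert he, bernoulliExpect, bernoulliExpect, mul_sum, mul_sum]
  congr 1 <;> refine sum_congr rfl fun s hs => ?_ <;>
    have hes : e ∉ s := fun h => he (mem_powerset.1 hs h)
  · rw [(bernoulliWeight_insert he (mem_powerset.1 hs)).1, update_ofOpenEdges, if_neg (by simp),
      erase_eq_of_notMem hes, mul_assoc]
  · rw [(bernoulliWeight_insert he (mem_powerset.1 hs)).2, update_ofOpenEdges, if_pos rfl,
      mul_assoc]

lemma DependsOn.update_of_notMem {F : PConfig d → ℝ} {S : Set (PEdge d)} (hF : DependsOn F S)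
    {e : PEdge d} (he : e ∉ S) (b : Bool) (ω : PConfig d) : F (Function.update ω e b) = F ω :=
  hF fun x hx => update_of_ne (by rintro rfl; exact he hx) _ _

lemma DependsOn.comp_update {F : PConfig d → ℝ} {S : Set (PEdge d)} (hF : DependsOn F S)
    (e : PEdge d) (b : Bool) : DependsOn (fun ω => F (Function.update ω e b)) (S \ {e}) := by
  intro ω ω' h
  refine hF fun x hx => ?_
  by_cases hxe : x = e
  · subst hxe; simp
  · simp [update_of_ne hxe, h x ⟨hx, hxe⟩]

lemma bernoulliExpect_mul_of_disjoint {E₁ E₂ : Finset (PEdge d)} (hE : Disjoint E₁ E₂)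
    {F G : PConfig d → ℝ} (hF : DependsOn F ↑E₁) (hG : DependsOn G ↑E₂) :
    bernoulliExpect p (E₁ ∪ E₂) (fun ω => F ω * G ω) =
      bernoulliExpect p E₁ F * bernoulliExpect p E₂ G := by
  induction E₂ using Finset.induction_on generalizing G with
  | empty =>
    have hconst : ∀ ω, G ω = G (ofOpenEdges ∅) := fun ω => hG (by simp)
    simp only [hconst, union_empty, bernoulliExpect_mul_const, bernoulliExpect_empty]
  | @insert e E₂ heE₂ ih =>
    have he₁ : e ∉ E₁ := disjoint_right.1 hE (mem_insert_self e E₂)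
    have hE' : Disjoint E₁ E₂ := hE.mono_right (subset_insert e E₂)
    have hG' : ∀ b, DependsOn (fun ω => G (update ω e b)) ↑E₂ := fun b =>
      (hG.comp_update e b).mono (by intro x; simp +contextual)
    rw [union_insert, bernoulliExpect_insert (by simp [he₁, heE₂]), bernoulliExpect_insert heE₂]
    simp only [hF.update_of_notMem (by simpa using he₁)]
    rw [ih hE' (hG' false), ih hE' (hG' true)]
    ring

lemma bernoulliExpect_of_dependsOn {E' : Finset (PEdge d)} (hE' : E' ⊆ E)
    {F : PConfig d → ℝ} (hF : DependsOn F ↑E') :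
    bernoulliExpect p E F = bernoulliExpect p E' F := by
  have h := bernoulliExpect_mul_of_disjoint (p := p) (E₂ := E \ E') disjoint_sdiff hF
    ((dependsOn_const (1 : ℝ)).mono (Set.empty_subset _))
  simpa [union_sdiff_of_subset hE', bernoulliExpect_const] using h

/-- Russo's formula. -/
lemma hasDerivAt_bernoulliExpect (E : Finset (PEdge d)) (F : PConfig d → ℝ) (p : ℝ) :
    HasDerivAt (fun q => bernoulliExpect q E F)
      (∑ e ∈ E, (bernoulliExpect p E (fun ω => F (update ω e true)) -
        bernoulliExpect p E (fun ω => F (update ω e false)))) p := by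
  induction E using Finset.induction_on generalizing F with
  | empty =>
    simpa only [bernoulliExpect_empty, sum_empty] using hasDerivAt_const p _
  | @insert e E he ih =>
    have hfun : (fun q => bernoulliExpect q (insert e E) F) = fun q =>
        (1 - q) * bernoulliExpect q E (fun ω => F (update ω e false)) +
          q * bernoulliExpect q E (fun ω => F (update ω e true)) :=
      funext fun q => bernoulliExpect_insert he F
    rw [hfun]
    refine ((((hasDerivAt_id p).const_sub 1).mul (ih _)).add
      ((hasDerivAt_id p).mul (ih _))).congr_deriv ?_
    have hpinned : ∀ b, bernoulliExpect p (insert e E) (fun ω => F (update ω e b)) =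
        bernoulliExpect p E (fun ω => F (update ω e b)) := by
      intro b
      simp only [bernoulliExpect_insert he, update_idem]
      ring
    have hother : ∀ f ∈ E, ∀ b, bernoulliExpect p (insert e E) (fun ω => F (update ω f b)) =
        (1 - p) * bernoulliExpect p E (fun ω => F (update (update ω f b) e false)) +
          p * bernoulliExpect p E (fun ω => F (update (update ω f b) e true)) := by
      intro f hf b
      have hfe : f ≠ e := by rintro rfl; exact he hf
      simp only [bernoulliExpect_insert he, update_comm hfe]
    have hsum : ∑ f ∈ E, (bernoulliExpect p (insert e E) (fun ω => F (update ω f true)) -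
        bernoulliExpect p (insert e E) (fun ω => F (update ω f false))) =
        (1 - p) * ∑ f ∈ E, (bernoulliExpect p E (fun ω => F (update (update ω f true) e false)) -
          bernoulliExpect p E (fun ω => F (update (update ω f false) e false))) +
        p * ∑ f ∈ E, (bernoulliExpect p E (fun ω => F (update (update ω f true) e true)) -
          bernoulliExpect p E (fun ω => F (update (update ω f false) e true))) := by
      rw [mul_sum, mul_sum, ← sum_add_distrib]
      exact sum_congr rfl fun f hf => by rw [hother f hf, hother f hf]; ring
    rw [sum_insert he, hpinned, hpinned, hsum]
    simp only [id_eq]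
    ring

end BernoulliExpectation

section CylinderProbability

variable {E : Finset (PEdge d)} {A B : PConfig d → Prop}

lemma cylProb_nonneg (h0 : 0 ≤ p) (h1 : p ≤ 1) (E : Finset (PEdge d)) (A : PConfig d → Prop) :
    0 ≤ cylProb d p E A := by
  rw [cylProb_eq_bernoulliExpect, ← bernoulliExpect_const p 0 E]
  exact bernoulliExpect_mono h0 h1 fun ω => ind_nonneg _

lemma cylProb_le_one (h0 : 0 ≤ p) (h1 : p ≤ 1) (E : Finset (PEdge d)) (A : PConfig d → Prop) :
    cylProb d p E A ≤ 1 := by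
  rw [cylProb_eq_bernoulliExpect, ← bernoulliExpect_const p 1 E]
  exact bernoulliExpect_mono h0 h1 fun ω => ind_le_one _

lemma cylProb_mono (h0 : 0 ≤ p) (h1 : p ≤ 1) (h : ∀ ω, A ω → B ω) :
    cylProb d p E A ≤ cylProb d p E B := by
  simp only [cylProb_eq_bernoulliExpect]
  exact bernoulliExpect_mono h0 h1 fun ω => ind_le_ind (h ω)

lemma cylProb_not (E : Finset (PEdge d)) (A : PConfig d → Prop) :
    cylProb d p E (fun ω => ¬ A ω) = 1 - cylProb d p E A := by
  simp only [cylProb_eq_bernoulliExpect, ind_not]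
  rw [bernoulliExpect_sub E (fun _ => 1), bernoulliExpect_const]

lemma cylProb_sub_of_imp (h : ∀ ω, A ω → B ω) :
    cylProb d p E B - cylProb d p E A = cylProb d p E (fun ω => B ω ∧ ¬ A ω) := by
  simp only [cylProb_eq_bernoulliExpect, ← bernoulliExpect_sub]
  congr 1
  funext ω
  have := h ω
  unfold ind
  by_cases hA : A ω <;> by_cases hB : B ω <;> simp_all

lemma cylProb_le_sum {ι : Type*} (h0 : 0 ≤ p) (h1 : p ≤ 1) {u : Finset ι}
    {B : ι → PConfig d → Prop} (h : ∀ ω, A ω → ∃ i ∈ u, B i ω) :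
    cylProb d p E A ≤ ∑ i ∈ u, cylProb d p E (B i) := by
  simp only [cylProb_eq_bernoulliExpect, ← bernoulliExpect_sum]
  refine bernoulliExpect_mono h0 h1 fun ω => ?_
  by_cases hA : A ω
  · obtain ⟨i, hi, hBi⟩ := h ω hA
    rw [ind_of_true hA, ← ind_of_true hBi]
    exact single_le_sum (f := fun i => ind (B i ω)) (fun j _ => ind_nonneg _) hi
  · rw [ind_of_false hA]
    exact sum_nonneg fun i _ => ind_nonneg _

lemma sum_cylProb_le {ι : Type*} (h0 : 0 ≤ p) (h1 : p ≤ 1) {u : Finset ι}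
    {B : ι → PConfig d → Prop} (hBA : ∀ i ∈ u, ∀ ω, B i ω → A ω)
    (hdisj : ∀ i ∈ u, ∀ j ∈ u, i ≠ j → ∀ ω, B i ω → ¬ B j ω) :
    ∑ i ∈ u, cylProb d p E (B i) ≤ cylProb d p E A := by
  simp only [cylProb_eq_bernoulliExpect, ← bernoulliExpect_sum]
  refine bernoulliExpect_mono h0 h1 fun ω => ?_
  by_cases hex : ∃ i ∈ u, B i ω
  · obtain ⟨i, hi, hBi⟩ := hex
    rw [sum_eq_single_of_mem i hi fun j hj hji => ind_of_false (hdisj i hi j hj hji.symm ω hBi),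
      ind_of_true hBi, ind_of_true (hBA i hi ω hBi)]
  · push Not at hex
    rw [sum_eq_zero fun i hi => ind_of_false (hex i hi)]
    exact ind_nonneg _

lemma cylProb_and_of_disjoint {E₁ E₂ : Finset (PEdge d)} (hE : Disjoint E₁ E₂)
    (hA : DependsOn A ↑E₁) (hB : DependsOn B ↑E₂) :
    cylProb d p (E₁ ∪ E₂) (fun ω => A ω ∧ B ω) = cylProb d p E₁ A * cylProb d p E₂ B := by
  simp only [cylProb_eq_bernoulliExpect, ind_and]
  exact bernoulliExpect_mul_of_disjoint hE (fun _ _ h => by rw [hA h]) fun _ _ h => by rw [hB h]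

lemma dependsOn_and {E₁ E₂ : Finset (PEdge d)} (hA : DependsOn A ↑E₁) (hB : DependsOn B ↑E₂) :
    DependsOn (fun ω => A ω ∧ B ω) ↑(E₁ ∪ E₂) := fun _ _ h =>
  congrArg₂ And (hA fun e he => h e (mem_union_left _ he))
    (hB fun e he => h e (mem_union_right _ he))

lemma cylProb_of_dependsOn {E' : Finset (PEdge d)} (hE' : E' ⊆ E) (hA : DependsOn A ↑E') :
    cylProb d p E A = cylProb d p E' A := by
  simp only [cylProb_eq_bernoulliExpect]
  exact bernoulliExpect_of_dependsOn hE' fun _ _ h => by rw [hA h]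

lemma cylProb_edge_open (e : PEdge d) : cylProb d p {e} (fun ω => ω e = true) = p := by
  rw [cylProb_eq_bernoulliExpect, ← insert_empty, bernoulliExpect_insert (notMem_empty e)]
  simp [bernoulliExpect_empty, ind]

lemma hasDerivAt_cylProb (E : Finset (PEdge d)) (A : PConfig d → Prop) (p : ℝ) :
    HasDerivAt (fun q => cylProb d q E A)
      (∑ e ∈ E, (cylProb d p E (fun ω => A (update ω e true)) -
        cylProb d p E (fun ω => A (update ω e false)))) p := by
  simp only [cylProb_eq_bernoulliExpect]
  exact hasDerivAt_bernoulliExpect E _ p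

end CylinderProbability

section LatticeGeometry

lemma supNorm_le_iff {x : PVert d} {n : ℕ} : supNorm x ≤ n ↔ ∀ i, (x i).natAbs ≤ n := by
  simp [supNorm]

lemma supNorm_zero : supNorm (0 : PVert d) = 0 := by
  simp [supNorm]

lemma supNorm_add_le (x y : PVert d) : supNorm (x + y) ≤ supNorm x + supNorm y :=
  supNorm_le_iff.2 fun i => (Int.natAbs_add_le _ _).trans <|
    add_le_add (le_sup (f := fun i => (x i).natAbs) (mem_univ i))
      (le_sup (f := fun i => (y i).natAbs) (mem_univ i))

lemma supNorm_le_supNorm_sub_add (x y : PVert d) : supNorm x ≤ supNorm (x - y) + supNorm y := by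
  simpa using supNorm_add_le (x - y) y

lemma supNorm_unitVec_le (i : Fin d) : supNorm (unitVec d i) ≤ 1 :=
  supNorm_le_iff.2 fun j => by unfold unitVec; split <;> simp

lemma supNorm_add_unitVec_le (x : PVert d) (i : Fin d) :
    supNorm (x + unitVec d i) ≤ supNorm x + 1 :=
  (supNorm_add_le _ _).trans (add_le_add_right (supNorm_unitVec_le i) _)

lemma supNorm_le_supNorm_add_unitVec (x : PVert d) (i : Fin d) :
    supNorm x ≤ supNorm (x + unitVec d i) + 1 :=
  (supNorm_le_supNorm_sub_add x (-unitVec d i)).trans <| by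
    simpa [sub_eq_add_neg, supNorm] using supNorm_unitVec_le i

lemma mem_boxF {x : PVert d} {n : ℕ} : x ∈ boxF d n ↔ supNorm x ≤ n := by
  simp only [boxF, Fintype.mem_piFinset, mem_Icc, supNorm_le_iff]
  exact forall_congr' fun i => by omega

lemma coe_boxF (n : ℕ) : (boxF d n : Set (PVert d)) = box d n :=
  Set.ext fun _ => mem_boxF

lemma mem_edgesIn {V : Finset (PVert d)} {f : PEdge d} :
    f ∈ edgesIn d V ↔ f.1 ∈ V ∧ f.1 + unitVec d f.2 ∈ V := by
  simp [edgesIn]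

lemma mem_boxEdges {n : ℕ} {f : PEdge d} :
    f ∈ boxEdges d n ↔ supNorm f.1 ≤ n ∧ supNorm (f.1 + unitVec d f.2) ≤ n := by
  rw [boxEdges, mem_edgesIn, mem_boxF, mem_boxF]

lemma edgesIn_mono {V W : Finset (PVert d)} (h : V ⊆ W) : edgesIn d V ⊆ edgesIn d W :=
  fun _ hf => mem_edgesIn.2 ⟨h (mem_edgesIn.1 hf).1, h (mem_edgesIn.1 hf).2⟩

lemma edgesIn_subset_boxEdges {V : Finset (PVert d)} {n : ℕ} (h : ∀ x ∈ V, supNorm x ≤ n) :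
    edgesIn d V ⊆ boxEdges d n :=
  edgesIn_mono fun x hx => mem_boxF.2 (h x hx)

end LatticeGeometry

section OpenPaths

variable {ω ω' : PConfig d} {S T U : Set (PVert d)} {a b : PVert d}

lemma openAdj_symm (h : openAdj ω a b) : openAdj ω b a := by
  obtain ⟨i, hi | hi⟩ := h
  exacts [⟨i, Or.inr hi⟩, ⟨i, Or.inl hi⟩]

lemma openAdj_of_eq_true {f : PEdge d} (hf : ω f = true) :
    openAdj ω f.1 (f.1 + unitVec d f.2) := ⟨f.2, Or.inl ⟨rfl, hf⟩⟩

lemma exists_edge_of_openAdj (h : openAdj ω a b) :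
    ∃ f : PEdge d, ω f = true ∧
      (f.1 = a ∧ f.1 + unitVec d f.2 = b ∨ f.1 = b ∧ f.1 + unitVec d f.2 = a) := by
  obtain ⟨i, hi | hi⟩ := h
  · exact ⟨(a, i), hi.2, Or.inl ⟨rfl, hi.1.symm⟩⟩
  · exact ⟨(b, i), hi.2, Or.inr ⟨rfl, hi.1.symm⟩⟩

lemma supNorm_sub_le_of_openAdj (h : openAdj ω a b) (y : PVert d) :
    supNorm (b - y) ≤ supNorm (a - y) + 1 := by
  obtain ⟨i, ⟨rfl, -⟩ | ⟨rfl, -⟩⟩ := h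
  · simpa [add_sub_right_comm] using supNorm_add_unitVec_le (a - y) i
  · simpa [add_sub_right_comm] using supNorm_le_supNorm_add_unitVec (b - y) i

lemma connIn_mono_set (h : S ⊆ T) (hc : connIn ω S a b) : connIn ω T a b :=
  Relation.ReflTransGen.mono (fun _ _ ⟨hu, hv, huv⟩ => ⟨h hu, h hv, huv⟩) _ _ hc

lemma connIn_mono_cfg (h : ∀ e, ω e = true → ω' e = true) (hc : connIn ω S a b) :
    connIn ω' S a b := by
  refine Relation.ReflTransGen.mono (fun u v ⟨hu, hv, i, hi⟩ => ⟨hu, hv, i, ?_⟩) _ _ hc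
  exact hi.imp (And.imp_right (h _)) (And.imp_right (h _))

lemma connIn_congr_cfg (h : ∀ f : PEdge d, f.1 ∈ S → f.1 + unitVec d f.2 ∈ S → ω f = ω' f)
    (hc : connIn ω S a b) : connIn ω' S a b := by
  refine Relation.ReflTransGen.mono (fun u v ⟨hu, hv, i, hi⟩ => ⟨hu, hv, i, ?_⟩) _ _ hc
  rcases hi with ⟨rfl, hi⟩ | ⟨rfl, hi⟩
  · exact Or.inl ⟨rfl, h (u, i) hu hv ▸ hi⟩
  · exact Or.inr ⟨rfl, h (v, i) hv hu ▸ hi⟩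

lemma dependsOn_connIn (S : Finset (PVert d)) (a b : PVert d) :
    DependsOn (fun ω => connIn ω ↑S a b) ↑(edgesIn d S) := by
  intro ω ω' h
  have hag : ∀ f : PEdge d, f.1 ∈ (S : Set (PVert d)) → f.1 + unitVec d f.2 ∈ (S : Set _) →
      ω f = ω' f := fun f h1 h2 => h f (mem_edgesIn.2 ⟨h1, h2⟩)
  exact propext ⟨connIn_congr_cfg hag, connIn_congr_cfg fun f h1 h2 => (hag f h1 h2).symm⟩

lemma dependsOn_exists_connIn (V : Finset (PVert d)) (x : PVert d) (P : PVert d → Prop) :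
    DependsOn (fun ω => ∃ y, P y ∧ connIn ω ↑V x y) ↑(edgesIn d V) := fun _ _ h =>
  propext <| exists_congr fun y => and_congr_right' (Iff.of_eq (dependsOn_connIn V x y h))

lemma connIn.right_mem (hc : connIn ω S a b) (ha : a ∈ S) : b ∈ S := by
  induction hc with
  | refl => exact ha
  | tail _ hstep _ => exact hstep.2.1

lemma connIn.left_mem (hc : connIn ω S a b) (hb : b ∈ S) : a ∈ S := by
  rcases Relation.ReflTransGen.cases_head hc with rfl | ⟨_, hstep, _⟩
  exacts [hb, hstep.1]

lemma update_true_apply_of_eq_true {f e : PEdge d} (h : ω e = true) :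
    update ω f true e = true := by
  by_cases hef : e = f
  · subst hef; exact update_self ..
  · rwa [update_of_ne hef]

lemma eq_true_of_update_false_apply {f e : PEdge d} (h : update ω f false e = true) :
    ω e = true := by
  by_cases hef : e = f
  · subst hef; simp at h
  · rwa [update_of_ne hef] at h

lemma connIn_inter_of_not_openAdj (hc : connIn ω U a b)
    (hT : ∀ u ∈ U, ∀ v ∈ U, u ∈ T → v ∉ T → ¬ openAdj ω u v) (ha : a ∈ T) :
    connIn ω (U ∩ T) a b := by
  revert ha
  induction hc using Relation.ReflTransGen.head_induction_on with
  | refl => exact fun _ => Relation.ReflTransGen.refl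
  | @head x c hstep _ ih =>
    obtain ⟨hx, hc, hxc⟩ := hstep
    intro hxT
    have hcT : c ∈ T := by_contra fun hcT => hT x hx c hc hxT hcT hxc
    exact Relation.ReflTransGen.head ⟨⟨hx, hxT⟩, ⟨hc, hcT⟩, hxc⟩ (ih hcT)

lemma connIn_last_exit {C : Set (PVert d)} (hc : connIn ω U a b) (ha : a ∈ C) (hb : b ∉ C) :
    ∃ z w, z ∈ C ∧ w ∉ C ∧ z ∈ U ∧ w ∈ U ∧ openAdj ω z w ∧ connIn ω (U \ C) w b := by
  induction hc with
  | refl => exact absurd ha hb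
  | @tail c y _ hstep ih =>
    obtain ⟨hcU, hyU, hadj⟩ := hstep
    by_cases hcC : c ∈ C
    · exact ⟨c, y, hcC, hb, hcU, hyU, hadj, Relation.ReflTransGen.refl⟩
    · obtain ⟨z, w, hzC, hwC, hzU, hwU, hzw, hwc⟩ := ih hcC
      exact ⟨z, w, hzC, hwC, hzU, hwU, hzw, hwc.tail ⟨⟨hcU, hcC⟩, ⟨hyU, hb⟩, hadj⟩⟩

lemma connIn_truncate {y : PVert d} {m : ℕ} (hc : connIn ω U a b) (ha : supNorm (a - y) ≤ m)
    (hb : m ≤ supNorm (b - y)) :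
    ∃ z, supNorm (z - y) = m ∧ connIn ω {u | supNorm (u - y) ≤ m} a z := by
  induction hc using Relation.ReflTransGen.head_induction_on with
  | refl => exact ⟨b, le_antisymm ha hb, Relation.ReflTransGen.refl⟩
  | @head x c hstep _ ih =>
    rcases eq_or_lt_of_le ha with hx | hx
    · exact ⟨x, hx, Relation.ReflTransGen.refl⟩
    · have hc : supNorm (c - y) ≤ m := by
        have := supNorm_sub_le_of_openAdj hstep.2.2 y
        omega
      obtain ⟨z, hz, hcz⟩ := ih hc
      exact ⟨z, hz, Relation.ReflTransGen.head ⟨hx.le, hc, hstep.2.2⟩ hcz⟩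

end OpenPaths

section EdgeBoundary

variable {S : Finset (PVert d)} {f : PEdge d}

/-- `ΔS`. An edge `(x, i)` of `ΔS` has `x ∈ S` or `x + eᵢ ∈ S`, which bounds it to a finset. -/
def edgeBoundary (S : Finset (PVert d)) : Finset (PEdge d) :=
  univ.biUnion fun i : Fin d =>
    ((S ∪ S.image (· - unitVec d i)) ×ˢ {i}).filter
      fun f => ¬ (f.1 ∈ S ↔ f.1 + unitVec d f.2 ∈ S)

lemma mem_edgeBoundary : f ∈ edgeBoundary S ↔ ¬ (f.1 ∈ S ↔ f.1 + unitVec d f.2 ∈ S) := by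
  simp only [edgeBoundary, mem_biUnion, mem_filter, mem_product, mem_union, mem_image,
    mem_singleton, mem_univ, true_and]
  refine ⟨fun ⟨_, _, h⟩ => h, fun h => ⟨f.2, ⟨?_, rfl⟩, h⟩⟩
  by_cases h1 : f.1 ∈ S
  · exact Or.inl h1
  · exact Or.inr ⟨_, by tauto, add_sub_cancel_right _ _⟩

def innerEnd (S : Finset (PVert d)) (f : PEdge d) : PVert d :=
  if f.1 ∈ S then f.1 else f.1 + unitVec d f.2

def outerEnd (S : Finset (PVert d)) (f : PEdge d) : PVert d :=
  if f.1 ∈ S then f.1 + unitVec d f.2 else f.1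

lemma innerEnd_mem (hf : f ∈ edgeBoundary S) : innerEnd S f ∈ S := by
  rw [mem_edgeBoundary] at hf
  unfold innerEnd
  split <;> tauto

lemma outerEnd_notMem (hf : f ∈ edgeBoundary S) : outerEnd S f ∉ S := by
  rw [mem_edgeBoundary] at hf
  unfold outerEnd
  split <;> tauto

lemma notMem_edgesIn_of_mem_edgeBoundary (hf : f ∈ edgeBoundary S) : f ∉ edgesIn d S := by
  rw [mem_edgeBoundary] at hf
  rw [mem_edgesIn]
  tauto

lemma ends_eq_innerEnd_outerEnd (S : Finset (PVert d)) (f : PEdge d) :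
    f.1 = innerEnd S f ∧ f.1 + unitVec d f.2 = outerEnd S f ∨
      f.1 = outerEnd S f ∧ f.1 + unitVec d f.2 = innerEnd S f := by
  unfold innerEnd outerEnd
  split <;> simp

lemma openAdj_innerEnd_outerEnd {ω : PConfig d} (hf : ω f = true) :
    openAdj ω (innerEnd S f) (outerEnd S f) := by
  rcases ends_eq_innerEnd_outerEnd S f with ⟨h1, h2⟩ | ⟨h1, h2⟩ <;> rw [← h1, ← h2]
  exacts [openAdj_of_eq_true hf, openAdj_symm (openAdj_of_eq_true hf)]

lemma supNorm_outerEnd_le (S : Finset (PVert d)) (f : PEdge d) :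
    supNorm (outerEnd S f) ≤ supNorm (innerEnd S f) + 1 := by
  rcases ends_eq_innerEnd_outerEnd S f with ⟨h1, h2⟩ | ⟨h1, h2⟩ <;> rw [← h1, ← h2]
  exacts [supNorm_add_unitVec_le _ _, supNorm_le_supNorm_add_unitVec _ _]

lemma edgeBoundary_subset_boxEdges {n : ℕ} (hS : ∀ x ∈ S, supNorm x < n) :
    edgeBoundary S ⊆ boxEdges d n := by
  intro f hf
  have hin : supNorm (innerEnd S f) < n := hS _ (innerEnd_mem hf)
  have hout := supNorm_outerEnd_le S f
  rw [mem_boxEdges]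
  rcases ends_eq_innerEnd_outerEnd S f with ⟨h1, h2⟩ | ⟨h1, h2⟩ <;> rw [h2, h1] <;> omega

lemma not_openAdj_of_edgeBoundary_closed {V : Finset (PVert d)} {ω : PConfig d}
    (hclosed : ∀ f ∈ edgesIn d V, f ∈ edgeBoundary S → ω f = false) {u v : PVert d}
    (hu : u ∈ V) (hv : v ∈ V) (huv : ¬ (u ∈ S ↔ v ∈ S)) : ¬ openAdj ω u v := by
  intro h
  obtain ⟨f, hf, ⟨rfl, rfl⟩ | ⟨rfl, rfl⟩⟩ := exists_edge_of_openAdj h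
  · simp [hclosed f (mem_edgesIn.2 ⟨hu, hv⟩) (mem_edgeBoundary.2 huv)] at hf
  · simp [hclosed f (mem_edgesIn.2 ⟨hv, hu⟩) (mem_edgeBoundary.2 fun h => huv h.symm)] at hf

end EdgeBoundary

noncomputable def phi (p : ℝ) (S : Finset (PVert d)) : ℝ :=
  p * ∑ f ∈ edgeBoundary S, cylProb d p (edgesIn d S) (fun ω => connIn ω ↑S 0 (innerEnd S f))

noncomputable def pTilde (d : ℕ) : ℝ :=
  sSup {p : ℝ | p ∈ Set.Icc 0 1 ∧ ∃ S : Finset (PVert d), 0 ∈ S ∧ phi p S < 1}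

lemma phi_nonneg (h0 : 0 ≤ p) (h1 : p ≤ 1) (S : Finset (PVert d)) : 0 ≤ phi p S :=
  mul_nonneg h0 <| sum_nonneg fun _ _ => cylProb_nonneg h0 h1 _ _

lemma pTilde_nonneg (d : ℕ) : 0 ≤ pTilde d :=
  le_csSup ⟨1, fun _ hq => hq.1.2⟩ ⟨⟨le_rfl, zero_le_one⟩, {0}, mem_singleton_self 0, by simp [phi]⟩

lemma one_le_phi_of_pTilde_lt (hp : pTilde d < p) (hp1 : p ≤ 1) {S : Finset (PVert d)}
    (h0S : 0 ∈ S) : 1 ≤ phi p S := by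
  by_contra! hlt
  exact hp.not_ge <| le_csSup ⟨1, fun _ hq => hq.1.2⟩
    ⟨⟨(pTilde_nonneg d).trans hp.le, hp1⟩, S, h0S, hlt⟩

section DifferentialInequality

variable {n : ℕ} {ω ω' : PConfig d} {x y : PVert d} {S : Finset (PVert d)} {f : PEdge d}

def reachesBoundary (n : ℕ) (ω : PConfig d) (x : PVert d) : Prop :=
  ∃ y, supNorm y = n ∧ connIn ω (box d n) x y

lemma reachesBoundary_mono (h : ∀ e, ω e = true → ω' e = true)
    (hx : reachesBoundary n ω x) : reachesBoundary n ω' x :=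
  hx.imp fun _ ⟨hy, hc⟩ => ⟨hy, connIn_mono_cfg h hc⟩

lemma reachesBoundary_of_openAdj (hx : supNorm x ≤ n) (hy : supNorm y ≤ n) (hxy : openAdj ω x y)
    (hreach : reachesBoundary n ω y) : reachesBoundary n ω x :=
  hreach.imp fun _ ⟨hz, hc⟩ => ⟨hz, Relation.ReflTransGen.head ⟨hx, hy, hxy⟩ hc⟩

/-- The random set `𝒮` of Duminil-Copin and Tassion. -/
noncomputable def unreached (n : ℕ) (ω : PConfig d) : Finset (PVert d) :=
  (boxF d n).filter fun x => ¬ reachesBoundary n ω x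

lemma mem_unreached : x ∈ unreached n ω ↔ supNorm x ≤ n ∧ ¬ reachesBoundary n ω x := by
  rw [unreached, mem_filter, mem_boxF]

lemma supNorm_lt_of_mem_unreached (hx : x ∈ unreached n ω) : supNorm x < n := by
  obtain ⟨hxn, hx⟩ := mem_unreached.1 hx
  exact hxn.lt_of_ne fun h => hx ⟨x, h, Relation.ReflTransGen.refl⟩

lemma eq_false_of_mem_edgeBoundary_unreached (hf : f ∈ boxEdges d n)
    (hfS : f ∈ edgeBoundary (unreached n ω)) : ω f = false := by
  rw [mem_boxEdges] at hf
  rw [mem_edgeBoundary, mem_unreached, mem_unreached] at hfS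
  by_contra hopen
  have hadj := openAdj_of_eq_true (Bool.not_eq_false _ ▸ hopen)
  by_cases h1 : reachesBoundary n ω f.1
  · exact hfS (iff_of_false (fun h => h.2 h1)
      fun h => h.2 (reachesBoundary_of_openAdj hf.2 hf.1 (openAdj_symm hadj) h1))
  · exact hfS (iff_of_true ⟨hf.1, h1⟩
      ⟨hf.2, fun h2 => h1 (reachesBoundary_of_openAdj hf.1 hf.2 hadj h2)⟩)

/-- On `{𝒮 = S}` the edges of `ΔS` are closed, so no open path crosses `ΔS` and `𝒮` is
determined by the edges outside `S`. -/
lemma unreached_eq_of_agree (hag : ∀ f ∈ boxEdges d n \ edgesIn d S, ω f = ω' f)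
    (hS : unreached n ω = S) : unreached n ω' = S := by
  have hSn : ∀ x ∈ S, supNorm x < n := hS ▸ fun x hx => supNorm_lt_of_mem_unreached hx
  have hclosed : ∀ f ∈ boxEdges d n, f ∈ edgeBoundary S → ω f = false := fun f hf hfS =>
    eq_false_of_mem_edgeBoundary_unreached hf (hS ▸ hfS)
  have hclosed' : ∀ f ∈ boxEdges d n, f ∈ edgeBoundary S → ω' f = false := fun f hf hfS =>
    (hag f (mem_sdiff.2 ⟨hf, notMem_edgesIn_of_mem_edgeBoundary hfS⟩)).symm.trans
      (hclosed f hf hfS)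
  ext x
  constructor
  · rw [mem_unreached]
    rintro ⟨hxn, hx⟩
    by_contra hxS
    obtain ⟨y, hy, hc⟩ : reachesBoundary n ω x := by
      by_contra h
      exact hxS (hS ▸ mem_unreached.2 ⟨hxn, h⟩)
    have hout : connIn ω (box d n ∩ (↑S)ᶜ) x y :=
      connIn_inter_of_not_openAdj hc (fun u hu v hv huS hvS =>
        not_openAdj_of_edgeBoundary_closed hclosed (mem_boxF.2 hu) (mem_boxF.2 hv)
          (by simp_all)) hxS
    refine hx ⟨y, hy, connIn_mono_set Set.inter_subset_left (connIn_congr_cfg ?_ hout)⟩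
    exact fun f hf1 hf2 => hag f <| mem_sdiff.2
      ⟨mem_boxEdges.2 ⟨hf1.1, hf2.1⟩, fun h => hf1.2 (mem_edgesIn.1 h).1⟩
  · intro hxS
    refine mem_unreached.2 ⟨(hSn x hxS).le, fun ⟨y, hy, hc⟩ => ?_⟩
    have hin : connIn ω' (box d n ∩ ↑S) x y :=
      connIn_inter_of_not_openAdj hc (fun u hu v hv huS hvS =>
        not_openAdj_of_edgeBoundary_closed hclosed' (mem_boxF.2 hu) (mem_boxF.2 hv)
          (by simp_all)) hxS
    have hyS : y ∈ S := (hin.right_mem ⟨(hSn x hxS).le, hxS⟩).2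
    exact (hSn y hyS).ne hy

lemma dependsOn_unreached_eq (n : ℕ) (S : Finset (PVert d)) :
    DependsOn (fun ω => unreached n ω = S) ↑(boxEdges d n \ edgesIn d S) := fun _ _ h =>
  propext ⟨unreached_eq_of_agree h, unreached_eq_of_agree fun f hf => (h f hf).symm⟩

lemma pivotal_of_unreached_eq (hS : unreached n ω = S) (hf : f ∈ edgeBoundary S)
    (hc : connIn ω ↑S 0 (innerEnd S f)) :
    zeroToBoundary d n (update ω f true) ∧ ¬ zeroToBoundary d n (update ω f false) := by
  have hSn : ∀ x ∈ S, supNorm x < n := hS ▸ fun x hx => supNorm_lt_of_mem_unreached hx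
  have h0S : (0 : PVert d) ∈ S := hc.left_mem (innerEnd_mem hf)
  have hin : supNorm (innerEnd S f) < n := hSn _ (innerEnd_mem hf)
  have hout : supNorm (outerEnd S f) ≤ n := (supNorm_outerEnd_le S f).trans hin
  constructor
  · have hreach : reachesBoundary n ω (outerEnd S f) := by
      by_contra h
      have hmem : outerEnd S f ∈ unreached n ω := mem_unreached.2 ⟨hout, h⟩
      rw [hS] at hmem
      exact outerEnd_notMem hf hmem
    have hpath : connIn (update ω f true) (box d n) 0 (innerEnd S f) :=
      connIn_mono_set (fun x hx => (hSn x hx).le) (connIn_mono_cfg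
        (fun _ => update_true_apply_of_eq_true) hc)
    obtain ⟨y, hy, hcy⟩ := reachesBoundary_of_openAdj hin.le hout
      (openAdj_innerEnd_outerEnd (update_self ..))
      (reachesBoundary_mono (fun _ => update_true_apply_of_eq_true) hreach)
    exact ⟨y, hy, hpath.trans hcy⟩
  · intro h
    exact (mem_unreached.1 (hS ▸ h0S)).2
      (reachesBoundary_mono (fun _ => eq_true_of_update_false_apply) h)


/-- The possible values of `𝒮` on the event `{0 ↮ ∂Λ_n}`. -/
noncomputable def rootedInteriorSets (d n : ℕ) : Finset (Finset (PVert d)) :=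
  (boxF d n).powerset.filter fun S => 0 ∈ S ∧ ∀ x ∈ S, supNorm x < n

lemma mem_rootedInteriorSets :
    S ∈ rootedInteriorSets d n ↔ 0 ∈ S ∧ ∀ x ∈ S, supNorm x < n := by
  rw [rootedInteriorSets, mem_filter, mem_powerset, and_iff_right_iff_imp]
  exact fun h x hx => mem_boxF.2 (h.2 x hx).le

lemma one_sub_theta_le_sum_unreached (h0 : 0 ≤ p) (h1 : p ≤ 1) (n : ℕ) :
    1 - theta d p n ≤ ∑ S ∈ rootedInteriorSets d n,
      cylProb d p (boxEdges d n) (fun ω => unreached n ω = S) := by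
  rw [theta, ← cylProb_not]
  refine cylProb_le_sum h0 h1 fun ω hω => ⟨unreached n ω, ?_, rfl⟩
  exact mem_rootedInteriorSets.2 ⟨mem_unreached.2 ⟨by simp [supNorm_zero], hω⟩,
    fun x hx => supNorm_lt_of_mem_unreached hx⟩

lemma cylProb_unreached_eq_le_sum (h0 : 0 ≤ p) (h1 : p ≤ 1) (hS : ∀ x ∈ S, supNorm x < n)
    (hphi : 1 ≤ phi p S) :
    cylProb d p (boxEdges d n) (fun ω => unreached n ω = S) ≤
      ∑ f ∈ edgeBoundary S, cylProb d p (boxEdges d n)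
        (fun ω => unreached n ω = S ∧ connIn ω ↑S 0 (innerEnd S f)) := by
  have hsub : edgesIn d S ⊆ boxEdges d n := edgesIn_subset_boxEdges fun x hx => (hS x hx).le
  have hfactor : ∀ f, cylProb d p (boxEdges d n)
      (fun ω => unreached n ω = S ∧ connIn ω ↑S 0 (innerEnd S f)) =
        cylProb d p (boxEdges d n) (fun ω => unreached n ω = S) *
          cylProb d p (edgesIn d S) (fun ω => connIn ω ↑S 0 (innerEnd S f)) := by
    intro f
    rw [cylProb_of_dependsOn sdiff_subset (dependsOn_unreached_eq n S),
      ← cylProb_and_of_disjoint sdiff_disjoint (dependsOn_unreached_eq n S)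
        (dependsOn_connIn S 0 _), sdiff_union_of_subset hsub]
  rw [sum_congr rfl fun f _ => hfactor f, ← mul_sum]
  refine le_mul_of_one_le_right (cylProb_nonneg h0 h1 _ _) (hphi.trans ?_)
  exact mul_le_of_le_one_left (sum_nonneg fun _ _ => cylProb_nonneg h0 h1 _ _) h1

lemma sum_cylProb_unreached_le_pivotal (h0 : 0 ≤ p) (h1 : p ≤ 1) (e : PEdge d) :
    ∑ S ∈ (rootedInteriorSets d n).filter (e ∈ edgeBoundary ·), cylProb d p (boxEdges d n)
        (fun ω => unreached n ω = S ∧ connIn ω ↑S 0 (innerEnd S e)) ≤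
      cylProb d p (boxEdges d n) (fun ω => zeroToBoundary d n (update ω e true)) -
        cylProb d p (boxEdges d n) (fun ω => zeroToBoundary d n (update ω e false)) := by
  rw [cylProb_sub_of_imp (A := fun ω => zeroToBoundary d n (update ω e false))
    (B := fun ω => zeroToBoundary d n (update ω e true)) fun ω => reachesBoundary_mono fun _ h =>
      update_true_apply_of_eq_true (eq_true_of_update_false_apply h)]
  exact sum_cylProb_le h0 h1
    (fun S hS ω hω => pivotal_of_unreached_eq hω.1 (mem_filter.1 hS).2 hω.2)
    fun S _ T _ hST ω hS hT => hST (hS.1.symm.trans hT.1)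

theorem one_sub_theta_le_deriv (hp : pTilde d < p) (hp1 : p ≤ 1) (n : ℕ) :
    1 - theta d p n ≤ deriv (fun q => theta d q n) p := by
  have h0 : 0 ≤ p := (pTilde_nonneg d).trans hp.le
  rw [show deriv (fun q => theta d q n) p = _ from
    (hasDerivAt_cylProb (boxEdges d n) (zeroToBoundary d n) p).deriv]
  calc 1 - theta d p n
      ≤ ∑ S ∈ rootedInteriorSets d n, cylProb d p (boxEdges d n) (fun ω => unreached n ω = S) :=
        one_sub_theta_le_sum_unreached h0 hp1 n
    _ ≤ ∑ S ∈ rootedInteriorSets d n, ∑ f ∈ edgeBoundary S, cylProb d p (boxEdges d n)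
          (fun ω => unreached n ω = S ∧ connIn ω ↑S 0 (innerEnd S f)) :=
        sum_le_sum fun S hS => cylProb_unreached_eq_le_sum h0 hp1
          (mem_rootedInteriorSets.1 hS).2
          (one_le_phi_of_pTilde_lt hp hp1 (mem_rootedInteriorSets.1 hS).1)
    _ = ∑ e ∈ boxEdges d n, ∑ S ∈ (rootedInteriorSets d n).filter (e ∈ edgeBoundary ·),
          cylProb d p (boxEdges d n)
            (fun ω => unreached n ω = S ∧ connIn ω ↑S 0 (innerEnd S e)) := by
        refine sum_comm' fun S e => ?_
        rw [mem_filter]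
        constructor
        · rintro ⟨hS, he⟩
          exact ⟨⟨hS, he⟩, edgeBoundary_subset_boxEdges (mem_rootedInteriorSets.1 hS).2 he⟩
        · exact fun h => h.1
    _ ≤ _ := sum_le_sum fun e _ => sum_cylProb_unreached_le_pivotal h0 hp1 e

end DifferentialInequality

section Integration

/-- `(1 - g r) eʳ` is antitone. -/
lemma one_sub_le_exp_mul_of_one_sub_le_deriv {g : ℝ → ℝ} {a b : ℝ} (hg : Differentiable ℝ g)
    (hab : a ≤ b) (h : ∀ r ∈ Set.Ioo a b, 1 - g r ≤ deriv g r) :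
    1 - g b ≤ Real.exp (a - b) * (1 - g a) := by
  set G : ℝ → ℝ := fun r => (1 - g r) * Real.exp r
  have hG : ∀ r, HasDerivAt G (-deriv g r * Real.exp r + (1 - g r) * Real.exp r) r :=
    fun r => ((hg r).hasDerivAt.const_sub 1).mul (Real.hasDerivAt_exp r)
  have hGdiff : Differentiable ℝ G := fun r => (hG r).differentiableAt
  have hanti : AntitoneOn G (Set.Icc a b) := by
    refine antitoneOn_of_deriv_nonpos (convex_Icc a b) hGdiff.continuous.continuousOn
      hGdiff.differentiableOn fun r hr => ?_
    rw [interior_Icc] at hr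
    rw [(hG r).deriv]
    nlinarith [h r hr, Real.exp_pos r]
  have hGab : G b ≤ G a := hanti ⟨le_rfl, hab⟩ ⟨hab, le_rfl⟩ hab
  rw [Real.exp_sub, div_mul_eq_mul_div, le_div_iff₀ (Real.exp_pos b)]
  linarith [hGab]

lemma one_sub_exp_le_theta (hp : pTilde d < p) (hp1 : p ≤ 1) (n : ℕ) :
    1 - Real.exp (pTilde d - p) ≤ theta d p n := by
  have hdiff : Differentiable ℝ (fun q => theta d q n) := fun q =>
    (hasDerivAt_cylProb (boxEdges d n) (zeroToBoundary d n) q).differentiableAt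
  have hint := one_sub_le_exp_mul_of_one_sub_le_deriv hdiff hp.le fun r hr =>
    one_sub_theta_le_deriv hr.1 (hr.2.le.trans hp1) n
  have hθ : 0 ≤ theta d (pTilde d) n := cylProb_nonneg (pTilde_nonneg d) (hp.le.trans hp1) _ _
  nlinarith [Real.exp_pos (pTilde d - p)]

lemma one_sub_exp_le_probZeroToInfty (hp : pTilde d < p) (hp1 : p ≤ 1) :
    1 - Real.exp (pTilde d - p) ≤ probZeroToInfty d p :=
  le_ciInf (one_sub_exp_le_theta hp hp1)

lemma mul_le_one_sub_exp_neg {u : ℝ} (h0 : 0 ≤ u) (h1 : u ≤ 1) :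
    (1 - Real.exp (-1)) * u ≤ 1 - Real.exp (-u) := by
  have hconv := convexOn_exp.2 (Set.mem_univ 0) (Set.mem_univ (-1)) (sub_nonneg.2 h1) h0
    (sub_add_cancel 1 u)
  simp only [smul_eq_mul, mul_zero, mul_neg, mul_one, zero_add, Real.exp_zero] at hconv
  linarith

end Integration

section Translation

lemma bernoulliExpect_comp_equiv (σ : PEdge d ≃ PEdge d) (E : Finset (PEdge d))
    (F : PConfig d → ℝ) :
    bernoulliExpect p (E.image σ) (fun ω => F (ω ∘ σ)) = bernoulliExpect p E F := by
  rw [bernoulliExpect, powerset_image, sum_image fun s _ t _ h => image_injective σ.injective h]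
  refine sum_congr rfl fun s _ => ?_
  have hcfg : ofOpenEdges (s.image σ) ∘ σ = ofOpenEdges s := by
    funext e
    simp [ofOpenEdges]
  rw [hcfg, bernoulliWeight, bernoulliWeight, ← image_sdiff _ _ σ.injective,
    card_image_of_injective _ σ.injective, card_image_of_injective _ σ.injective]

lemma DependsOn.comp_equiv {A : PConfig d → Prop} {E : Finset (PEdge d)} (hA : DependsOn A ↑E)
    (σ : PEdge d ≃ PEdge d) : DependsOn (fun ω => A (ω ∘ σ)) ↑(E.image σ) :=
  fun _ _ h => hA fun e he => h (σ e) (mem_image_of_mem σ he)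

def shiftEdge (y : PVert d) : PEdge d ≃ PEdge d := (Equiv.addRight y).prodCongr (Equiv.refl _)

lemma openAdj_comp_shiftEdge {ω : PConfig d} {y a b : PVert d} :
    openAdj (ω ∘ shiftEdge y) a b ↔ openAdj ω (a + y) (b + y) := by
  simp only [openAdj, comp_apply, shiftEdge, Equiv.prodCongr_apply, Equiv.coe_addRight,
    Equiv.coe_refl, Prod.map_apply, id_eq, add_right_comm _ y, add_left_inj]

lemma dependsOn_zeroToBoundary (n : ℕ) :
    DependsOn (zeroToBoundary d n) ↑(boxEdges d n) := by
  have h := dependsOn_exists_connIn (boxF d n) 0 (supNorm · = n)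
  rwa [coe_boxF] at h

lemma image_shiftEdge_boxEdges_subset {y : PVert d} {m n : ℕ} (h : supNorm y + m ≤ n) :
    (boxEdges d m).image (shiftEdge y) ⊆ boxEdges d n := by
  intro f hf
  obtain ⟨g, hg, rfl⟩ := mem_image.1 hf
  rw [mem_boxEdges] at hg ⊢
  simp only [shiftEdge, Equiv.prodCongr_apply, Equiv.coe_addRight, Equiv.coe_refl, Prod.map_fst,
    Prod.map_snd, id_eq, add_right_comm _ y]
  exact ⟨(supNorm_add_le _ _).trans (by omega), (supNorm_add_le _ _).trans (by omega)⟩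

lemma cylProb_zeroToBoundary_comp_shiftEdge {y : PVert d} {m n : ℕ} (h : supNorm y + m ≤ n) :
    cylProb d p (boxEdges d n) (fun ω => zeroToBoundary d m (ω ∘ shiftEdge y)) = theta d p m := by
  rw [cylProb_of_dependsOn (image_shiftEdge_boxEdges_subset h)
    ((dependsOn_zeroToBoundary m).comp_equiv _), cylProb_eq_bernoulliExpect,
    bernoulliExpect_comp_equiv (F := fun ω => ind (zeroToBoundary d m ω)),
    ← cylProb_eq_bernoulliExpect, theta]

lemma connIn_comp_shiftEdge {ω : PConfig d} {y a b : PVert d} {m : ℕ}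
    (hc : connIn ω {u | supNorm (u - y) ≤ m} a b) :
    connIn (ω ∘ shiftEdge y) (box d m) (a - y) (b - y) := by
  refine Relation.ReflTransGen.lift (· - y) (fun u v ⟨hu, hv, huv⟩ => ⟨hu, hv, ?_⟩) _ _ hc
  rwa [openAdj_comp_shiftEdge, sub_add_cancel, sub_add_cancel]

/-- An open path from `x` to `∂Λ_n` crosses the sphere of radius `m` around `x`. -/
lemma cylProb_exists_connIn_le_theta {x : PVert d} {V : Set (PVert d)} {m n : ℕ} (h0 : 0 ≤ p)
    (h1 : p ≤ 1) (h : supNorm x + m ≤ n) :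
    cylProb d p (boxEdges d n) (fun ω => ∃ b, supNorm b = n ∧ connIn ω V x b) ≤ theta d p m := by
  rw [← cylProb_zeroToBoundary_comp_shiftEdge h]
  refine cylProb_mono h0 h1 fun ω ⟨b, hb, hc⟩ => ?_
  have hbx : m ≤ supNorm (b - x) := by
    have := supNorm_le_supNorm_sub_add b x
    omega
  obtain ⟨z, hz, hxz⟩ := connIn_truncate hc (by simp [supNorm_zero]) hbx
  exact ⟨z - x, hz, by simpa using connIn_comp_shiftEdge hxz⟩

end Translation

section SimonLieb

variable {n : ℕ} {S C : Finset (PVert d)} {ω ω' : PConfig d} {v w : PVert d} {f : PEdge d}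

noncomputable def clusterIn (S : Finset (PVert d)) (ω : PConfig d) : Finset (PVert d) :=
  S.filter fun v => connIn ω ↑S 0 v

lemma mem_clusterIn : v ∈ clusterIn S ω ↔ v ∈ S ∧ connIn ω ↑S 0 v := mem_filter

lemma clusterIn_subset : clusterIn S ω ⊆ S := filter_subset _ _

lemma zero_mem_clusterIn (h0S : 0 ∈ S) : 0 ∈ clusterIn S ω :=
  mem_clusterIn.2 ⟨h0S, Relation.ReflTransGen.refl⟩

lemma mem_clusterIn_of_openAdj (hv : v ∈ clusterIn S ω) (hw : w ∈ S) (hvw : openAdj ω v w) :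
    w ∈ clusterIn S ω := by
  rw [mem_clusterIn] at hv ⊢
  exact ⟨hw, hv.2.tail ⟨hv.1, hw, hvw⟩⟩

lemma eq_false_of_mem_edgeBoundary_clusterIn (hf : f ∈ edgesIn d S)
    (hfC : f ∈ edgeBoundary (clusterIn S ω)) : ω f = false := by
  rw [mem_edgesIn] at hf
  rw [mem_edgeBoundary] at hfC
  by_contra hopen
  have hadj := openAdj_of_eq_true (Bool.not_eq_false _ ▸ hopen)
  exact hfC ⟨fun h => mem_clusterIn_of_openAdj h hf.2 hadj,
    fun h => mem_clusterIn_of_openAdj h hf.1 (openAdj_symm hadj)⟩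

noncomputable def touchingEdges (S C : Finset (PVert d)) : Finset (PEdge d) :=
  (edgesIn d S).filter fun f => f.1 ∈ C ∨ f.1 + unitVec d f.2 ∈ C

lemma clusterIn_eq_of_agree (h0S : 0 ∈ S) (hag : ∀ f ∈ touchingEdges S C, ω f = ω' f)
    (hC : clusterIn S ω = C) : clusterIn S ω' = C := by
  have hCS : C ⊆ S := hC ▸ clusterIn_subset
  have h0C : 0 ∈ C := hC ▸ zero_mem_clusterIn h0S
  have hclosed : ∀ f ∈ edgesIn d S, f ∈ edgeBoundary C → ω f = false := fun f hf hfC =>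
    eq_false_of_mem_edgeBoundary_clusterIn hf (hC ▸ hfC)
  have hclosed' : ∀ f ∈ edgesIn d S, f ∈ edgeBoundary C → ω' f = false := fun f hf hfC => by
    refine (hag f (mem_filter.2 ⟨hf, ?_⟩)).symm.trans (hclosed f hf hfC)
    rw [mem_edgeBoundary] at hfC
    tauto
  ext v
  constructor
  · rw [mem_clusterIn]
    rintro ⟨-, hv⟩
    have hin := connIn_inter_of_not_openAdj hv (T := ↑C) (fun u hu w hw huC hwC =>
      not_openAdj_of_edgeBoundary_closed hclosed' hu hw (by simp_all)) h0C
    exact (hin.right_mem ⟨h0S, h0C⟩).2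
  · intro hvC
    have hv : connIn ω ↑S 0 v := (mem_clusterIn.1 (hC ▸ hvC : v ∈ clusterIn S ω)).2
    have hin := connIn_inter_of_not_openAdj hv (T := ↑C) (fun u hu w hw huC hwC =>
      not_openAdj_of_edgeBoundary_closed hclosed hu hw (by simp_all)) h0C
    refine mem_clusterIn.2 ⟨hCS hvC, connIn_mono_set (S := ↑S ∩ ↑C) Set.inter_subset_left ?_⟩
    exact connIn_congr_cfg (fun f h1 h2 => hag f (mem_filter.2
      ⟨mem_edgesIn.2 ⟨h1.1, h2.1⟩, Or.inl h1.2⟩)) hin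

lemma dependsOn_clusterIn_eq (h0S : 0 ∈ S) (C : Finset (PVert d)) :
    DependsOn (fun ω => clusterIn S ω = C) ↑(touchingEdges S C) := fun _ _ h =>
  propext ⟨clusterIn_eq_of_agree h0S h, clusterIn_eq_of_agree h0S fun f hf => (h f hf).symm⟩

lemma mem_edgeBoundary_of_ends {z w : PVert d} (hz : z ∈ S) (hw : w ∉ S)
    (hf : f.1 = z ∧ f.1 + unitVec d f.2 = w ∨ f.1 = w ∧ f.1 + unitVec d f.2 = z) :
    f ∈ edgeBoundary S ∧ innerEnd S f = z ∧ outerEnd S f = w := by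
  rcases hf with ⟨rfl, rfl⟩ | ⟨rfl, rfl⟩ <;>
    simp [mem_edgeBoundary, innerEnd, outerEnd, hz, hw]

lemma exists_exit_of_zeroToBoundary (h0S : 0 ∈ S) (hSn : ∀ x ∈ S, supNorm x < n)
    (hω : zeroToBoundary d n ω) :
    ∃ f ∈ edgeBoundary S, innerEnd S f ∈ clusterIn S ω ∧ ω f = true ∧
      ∃ b, supNorm b = n ∧ connIn ω ↑(boxF d n \ clusterIn S ω) (outerEnd S f) b := by
  obtain ⟨b, hb, hc⟩ := hω
  have hbC : b ∉ (clusterIn S ω : Set (PVert d)) := fun h => (hSn b (clusterIn_subset h)).ne hb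
  obtain ⟨z, w, hzC, hwC, -, -, hzw, hwb⟩ := connIn_last_exit hc (zero_mem_clusterIn h0S) hbC
  have hwS : w ∉ S := fun hwS => hwC (mem_clusterIn_of_openAdj hzC hwS hzw)
  obtain ⟨g, hg, hends⟩ := exists_edge_of_openAdj hzw
  obtain ⟨hgS, hin, hout⟩ := mem_edgeBoundary_of_ends (clusterIn_subset hzC) hwS hends
  refine ⟨g, hgS, hin ▸ hzC, hg, b, hb, ?_⟩
  rwa [coe_sdiff, coe_boxF, hout]

lemma cylProb_clusterIn_eq_edge_open_reach (hSn : ∀ x ∈ S, supNorm x < n) (h0S : 0 ∈ S)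
    (hf : f ∈ edgeBoundary S) (hfC : innerEnd S f ∈ C) :
    cylProb d p (boxEdges d n) (fun ω => clusterIn S ω = C ∧ ω f = true ∧
        ∃ b, supNorm b = n ∧ connIn ω ↑(boxF d n \ C) (outerEnd S f) b) =
      cylProb d p (boxEdges d n) (fun ω => clusterIn S ω = C) * (p *
        cylProb d p (boxEdges d n)
          (fun ω => ∃ b, supNorm b = n ∧ connIn ω ↑(boxF d n \ C) (outerEnd S f) b)) := by
  have hsub₁ : touchingEdges S C ⊆ boxEdges d n :=
    (filter_subset _ _).trans (edgesIn_subset_boxEdges fun x hx => (hSn x hx).le)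
  have hsub₂ : {f} ⊆ boxEdges d n := singleton_subset_iff.2 (edgeBoundary_subset_boxEdges hSn hf)
  have hsub₃ : edgesIn d (boxF d n \ C) ⊆ boxEdges d n := edgesIn_mono sdiff_subset
  have hdep₁ := dependsOn_clusterIn_eq h0S C
  have hdep₂ : DependsOn (fun ω : PConfig d => ω f = true) ↑({f} : Finset (PEdge d)) :=
    fun _ _ h => by simp only [h f (mem_singleton_self f)]
  have hdep₃ := dependsOn_exists_connIn (boxF d n \ C) (outerEnd S f) (supNorm · = n)
  have hdisj₁₂ : Disjoint (touchingEdges S C) {f} := disjoint_singleton_right.2 fun h =>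
    notMem_edgesIn_of_mem_edgeBoundary hf (mem_filter.1 h).1
  have hdisj₁₃ : Disjoint (touchingEdges S C) (edgesIn d (boxF d n \ C)) := by
    refine disjoint_left.2 fun g hg₁ hg₃ => ?_
    simp only [touchingEdges, mem_filter, mem_edgesIn, mem_sdiff] at hg₁ hg₃
    tauto
  have hdisj₂₃ : Disjoint {f} (edgesIn d (boxF d n \ C)) := by
    refine disjoint_singleton_left.2 fun h => ?_
    simp only [mem_edgesIn, mem_sdiff] at h
    rcases ends_eq_innerEnd_outerEnd S f with ⟨h1, h2⟩ | ⟨h1, h2⟩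
    · exact h.1.2 (h1 ▸ hfC)
    · exact h.2.2 (h2 ▸ hfC)
  rw [cylProb_of_dependsOn (union_subset hsub₁ (union_subset hsub₂ hsub₃))
      (dependsOn_and hdep₁ (dependsOn_and hdep₂ hdep₃)),
    cylProb_and_of_disjoint (disjoint_union_right.2 ⟨hdisj₁₂, hdisj₁₃⟩) hdep₁
      (dependsOn_and hdep₂ hdep₃),
    cylProb_and_of_disjoint hdisj₂₃ hdep₂ hdep₃, cylProb_edge_open,
    ← cylProb_of_dependsOn hsub₁ hdep₁, ← cylProb_of_dependsOn hsub₃ hdep₃]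

lemma sum_cylProb_clusterIn_eq_le (h0 : 0 ≤ p) (h1 : p ≤ 1) {E : Finset (PEdge d)}
    (hsub : edgesIn d S ⊆ E) (x : PVert d) :
    ∑ C ∈ S.powerset.filter (x ∈ ·), cylProb d p E (fun ω => clusterIn S ω = C) ≤
      cylProb d p (edgesIn d S) (fun ω => connIn ω ↑S 0 x) := by
  rw [← cylProb_of_dependsOn hsub (dependsOn_connIn S 0 x)]
  refine sum_cylProb_le h0 h1 (fun C hC ω hω => ?_) fun C _ C' _ hne ω h h' => hne (h.symm.trans h')
  rw [← hω] at hC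
  exact (mem_clusterIn.1 (mem_filter.1 hC).2).2

/-- The Simon–Lieb inequality. -/
theorem theta_le_phi_mul_theta (h0 : 0 ≤ p) (h1 : p ≤ 1) (h0S : 0 ∈ S) {L : ℕ}
    (hSL : ∀ x ∈ S, supNorm x ≤ L) (hLn : L < n) :
    theta d p n ≤ phi p S * theta d p (n - (L + 1)) := by
  have hSn : ∀ x ∈ S, supNorm x < n := fun x hx => (hSL x hx).trans_lt hLn
  set m := n - (L + 1)
  calc theta d p n
      ≤ ∑ i ∈ (edgeBoundary S).sigma fun f => S.powerset.filter (innerEnd S f ∈ ·),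
          cylProb d p (boxEdges d n) (fun ω => clusterIn S ω = i.2 ∧ ω i.1 = true ∧
            ∃ b, supNorm b = n ∧ connIn ω ↑(boxF d n \ i.2) (outerEnd S i.1) b) := by
        refine cylProb_le_sum h0 h1 fun ω hω => ?_
        obtain ⟨f, hf, hfC, hopen, hreach⟩ := exists_exit_of_zeroToBoundary h0S hSn hω
        exact ⟨⟨f, clusterIn S ω⟩,
          mem_sigma.2 ⟨hf, mem_filter.2 ⟨mem_powerset.2 clusterIn_subset, hfC⟩⟩, rfl, hopen, hreach⟩
    _ ≤ ∑ i ∈ (edgeBoundary S).sigma fun f => S.powerset.filter (innerEnd S f ∈ ·),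
          cylProb d p (boxEdges d n) (fun ω => clusterIn S ω = i.2) * (p * theta d p m) := by
        refine sum_le_sum fun i hi => ?_
        obtain ⟨hf, hC⟩ := mem_sigma.1 hi
        obtain ⟨-, hfC⟩ := mem_filter.1 hC
        rw [cylProb_clusterIn_eq_edge_open_reach hSn h0S hf hfC]
        have hout := supNorm_outerEnd_le S i.1
        have hin := hSL _ (innerEnd_mem hf)
        gcongr
        · exact cylProb_nonneg h0 h1 _ _
        · exact cylProb_exists_connIn_le_theta h0 h1 (by omega)
    _ = ∑ f ∈ edgeBoundary S, (∑ C ∈ S.powerset.filter (innerEnd S f ∈ ·),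
          cylProb d p (boxEdges d n) (fun ω => clusterIn S ω = C)) * (p * theta d p m) := by
        rw [sum_sigma]
        simp only [sum_mul]
    _ ≤ ∑ f ∈ edgeBoundary S, cylProb d p (edgesIn d S)
          (fun ω => connIn ω ↑S 0 (innerEnd S f)) * (p * theta d p m) := by
        gcongr with f
        · exact mul_nonneg h0 (cylProb_nonneg h0 h1 _ _)
        · exact sum_cylProb_clusterIn_eq_le h0 h1
            (edgesIn_subset_boxEdges fun x hx => (hSn x hx).le) _
    _ = phi p S * theta d p m := by
        rw [phi, mul_sum, sum_mul]
        exact sum_congr rfl fun f _ => by ring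

end SimonLieb

section Subcriticality

lemma theta_le_phi_pow (h0 : 0 ≤ p) (h1 : p ≤ 1) {S : Finset (PVert d)} (h0S : 0 ∈ S)
    {L : ℕ} (hSL : ∀ x ∈ S, supNorm x ≤ L) (k : ℕ) :
    theta d p (k * (L + 1)) ≤ phi p S ^ k := by
  induction k with
  | zero => simpa [theta] using cylProb_le_one h0 h1 _ _
  | succ k ih =>
    calc theta d p ((k + 1) * (L + 1))
        ≤ phi p S * theta d p ((k + 1) * (L + 1) - (L + 1)) :=
          theta_le_phi_mul_theta h0 h1 h0S hSL (by nlinarith)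
      _ ≤ phi p S * phi p S ^ k := by
          rw [add_one_mul, Nat.add_sub_cancel]
          exact mul_le_mul_of_nonneg_left ih (phi_nonneg h0 h1 S)
      _ = phi p S ^ (k + 1) := (pow_succ' _ _).symm

lemma probZeroToInfty_eq_zero_of_phi_lt_one (h0 : 0 ≤ p) (h1 : p ≤ 1) {S : Finset (PVert d)}
    (h0S : 0 ∈ S) (hphi : phi p S < 1) : probZeroToInfty d p = 0 := by
  have hθ : ∀ n, 0 ≤ theta d p n := fun n => cylProb_nonneg h0 h1 _ _
  refine le_antisymm ?_ (le_ciInf hθ)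
  refine ge_of_tendsto' (tendsto_pow_atTop_nhds_zero_of_lt_one (phi_nonneg h0 h1 S) hphi)
    fun k => ?_
  exact (ciInf_le ⟨0, Set.forall_mem_range.2 hθ⟩ _).trans
    (theta_le_phi_pow h0 h1 h0S (fun x hx => le_sup (f := supNorm) hx) k)

lemma pTilde_le_pCrit (d : ℕ) : pTilde d ≤ pCrit d :=
  csSup_le ⟨0, ⟨le_rfl, zero_le_one⟩, {0}, mem_singleton_self 0, by simp [phi]⟩
    fun _ ⟨hq, _, h0S, hphi⟩ => le_csSup ⟨1, fun _ h => h.1.2⟩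
      ⟨hq, probZeroToInfty_eq_zero_of_phi_lt_one hq.1 hq.2 h0S hphi⟩

end Subcriticality

end

theorem mean_field_lower_bound_general (d : ℕ) :
    ∃ c : ℝ, 0 < c ∧ ∀ p : ℝ, p ≤ 1 → pCrit d < p →
      c * (p - pCrit d) ≤ probZeroToInfty d p := by
  have hc : 0 < 1 - Real.exp (-1) := sub_pos.2 (Real.exp_lt_one_iff.2 (by norm_num))
  refine ⟨1 - Real.exp (-1), hc, fun p hp1 hp => ?_⟩
  have hpt : pTilde d < p := (pTilde_le_pCrit d).trans_lt hp
  calc (1 - Real.exp (-1)) * (p - pCrit d)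
      ≤ (1 - Real.exp (-1)) * (p - pTilde d) := by gcongr; exact pTilde_le_pCrit d
    _ ≤ 1 - Real.exp (-(p - pTilde d)) :=
        mul_le_one_sub_exp_neg (sub_nonneg.2 hpt.le) (by linarith [pTilde_nonneg d])
    _ = 1 - Real.exp (pTilde d - p) := by rw [neg_sub]
    _ ≤ probZeroToInfty d p := one_sub_exp_le_probZeroToInfty hpt hp1

/-- **Sharpness of the phase transition: mean-field lower bound.**  For Bernoulli bond
percolation on `ℤ^d` (`d ≥ 1`), there is `c > 0` such that `ℙ_p[0 ↔ ∞] ≥ c(p − p_c)`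
for every `p > p_c`. -/
theorem mean_field_lower_bound (d : ℕ) (hd : 1 ≤ d) :
    ∃ c : ℝ, 0 < c ∧ ∀ p : ℝ, p ≤ 1 → pCrit d < p →
      c * (p - pCrit d) ≤ probZeroToInfty d p :=
  mean_field_lower_bound_general d
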